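/- arXiv:2104.03497 — 3 statements merged into one kernel-verified Lean document; each statement's English description precedes it below -/
import Mathlib

section
/- Let n ≥ 1 and let R, r, c > 0 with c > (R + r)^n. Then the n-dimensional Lebesgue measure of the set E = {x ∈ ℝⁿ : xₖ > R for all k, and ∏ₖ (xₖ + r) < c} is finite, and the limit of |E_c| / (c (log c)^(n-1)) as c → ∞ equals 1/(n-1)!. -/
/-!
Translating by `r` turns the region into `{y | ∀ k, a < y k, ∏ k, y k < c}` with `a = R + r`.
Integrating out the first coordinate gives the recursion
`V_{n+1}(c) = ∫_a^{c/a^n} V_n(c/x) dx`, which is solved by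
`V_n(c) = c P_n(log (c/a^n)) + (-1)^n a^n` with `P_n(L) = ∑_{j<n} (-1)^(n-1-j) L^j / j!`:
the primitive of the integrand is `-c P_{n+1}(log (c/(a^n x))) + (-1)^n a^n x` because
`P_{n+1}' = P_n`. Since `P_n(L) ~ L^(n-1)/(n-1)!` and `log (c/a^n) ~ log c`, we get
`V_n(c) ~ c (log c)^(n-1)/(n-1)!`.
-/

open MeasureTheory Filter Set Asymptotics
open scoped Nat

noncomputable def altExpSum : ℕ → ℝ → ℝ
  | 0, _ => 0
  | m + 1, L => L ^ m / (m ! : ℝ) - altExpSum m L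

theorem altExpSum_succ (m : ℕ) :
    altExpSum (m + 1) = fun L => L ^ m / (m ! : ℝ) - altExpSum m L := rfl

theorem hasDerivAt_altExpSum_succ (m : ℕ) (L : ℝ) :
    HasDerivAt (altExpSum (m + 1)) (altExpSum m L) L := by
  induction m with
  | zero => simpa [altExpSum_succ, altExpSum] using hasDerivAt_const L (1 : ℝ)
  | succ m ih =>
    have hpow :
        HasDerivAt (fun L : ℝ => L ^ (m + 1) / ((m + 1)! : ℝ)) (L ^ m / (m ! : ℝ)) L := by
      refine ((hasDerivAt_pow (m + 1) L).div_const ((m + 1)! : ℝ)).congr_deriv ?_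
      rw [Nat.factorial_succ, Nat.add_sub_cancel, Nat.cast_mul, mul_div_mul_left]
      positivity
    exact hpow.sub ih

theorem continuous_altExpSum : ∀ n, Continuous (altExpSum n)
  | 0 => continuous_const
  | m + 1 => continuous_iff_continuousAt.2 fun L => (hasDerivAt_altExpSum_succ m L).continuousAt

theorem altExpSum_succ_zero (m : ℕ) : altExpSum (m + 1) 0 = (-1) ^ m := by
  induction m with
  | zero => simp [altExpSum]
  | succ m ih => simp [altExpSum_succ, ih, pow_succ]

theorem altExpSum_isLittleO_pow (m : ℕ) : altExpSum m =o[atTop] fun L => L ^ m := by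
  induction m with
  | zero => simp only [altExpSum]; exact isLittleO_zero _ _
  | succ m ih =>
    have hlt : (fun L : ℝ => L ^ m) =o[atTop] fun L => L ^ (m + 1) :=
      isLittleO_pow_pow_atTop_of_lt (Nat.lt_succ_self m)
    rw [altExpSum_succ]
    exact (hlt.const_mul_left (m ! : ℝ)⁻¹ |>.congr_left fun L => by ring).sub (ih.trans hlt)

theorem altExpSum_succ_isEquivalent (m : ℕ) :
    altExpSum (m + 1) ~[atTop] fun L => L ^ m / (m ! : ℝ) := by
  rw [altExpSum_succ]
  refine IsEquivalent.refl.sub_isLittleO ((altExpSum_isLittleO_pow m).trans_isBigO ?_)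
  exact (isBigO_refl _ _).const_mul_right (inv_ne_zero (Nat.cast_ne_zero.2 m.factorial_ne_zero))
    |>.congr_right fun L => by ring

theorem volume_eq_lintegral_volume_cons {α : Type*} [MeasureSpace α]
    [SigmaFinite (volume : Measure α)] {n : ℕ} {s : Set (Fin (n + 1) → α)}
    (hs : MeasurableSet s) :
    volume s = ∫⁻ x, volume {z : Fin n → α | Fin.cons x z ∈ s} := by
  set e := MeasurableEquiv.piFinSuccAbove (fun _ : Fin (n + 1) => α) 0
  rw [← (volume_preserving_piFinSuccAbove (fun _ : Fin (n + 1) => α) 0).symm.measure_preimage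
    hs.nullMeasurableSet, Measure.volume_eq_prod, Measure.prod_apply (e.symm.measurable hs)]
  congr! with x
  ext z
  simp [e, MeasurableEquiv.piFinSuccAbove_symm_apply, Fin.consEquiv]

def hyperbolicRegion (a : ℝ) (n : ℕ) (c : ℝ) : Set (Fin n → ℝ) :=
  {y | (∀ k, a < y k) ∧ ∏ k, y k < c}

theorem measurableSet_hyperbolicRegion (a : ℝ) (n : ℕ) (c : ℝ) :
    MeasurableSet (hyperbolicRegion a n c) := by
  rw [hyperbolicRegion, ofPred_and, ofPred_forall]
  exact (MeasurableSet.iInter fun k => measurableSet_lt measurable_const (measurable_pi_apply k))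
    |>.inter (measurableSet_lt (Finset.measurable_prod _ fun k _ => measurable_pi_apply k)
      measurable_const)

theorem hyperbolicRegion_eq_empty {a c : ℝ} {n : ℕ} (ha : 0 ≤ a) (hc : c ≤ a ^ n) :
    hyperbolicRegion a n c = ∅ := by
  refine eq_empty_of_forall_notMem fun y ⟨hay, hyc⟩ => hyc.not_ge (hc.trans ?_)
  simpa using Finset.prod_le_prod (s := Finset.univ) (fun _ _ => ha) fun k _ => (hay k).le

theorem hyperbolicRegion_zero {a c : ℝ} (hc : 1 < c) : hyperbolicRegion a 0 c = univ := by
  simp [hyperbolicRegion, hc]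

theorem setOf_cons_mem_hyperbolicRegion {a c x : ℝ} {n : ℕ} (ha : 0 ≤ a) (hx : a < x) :
    {z : Fin n → ℝ | Fin.cons x z ∈ hyperbolicRegion a (n + 1) c} =
      hyperbolicRegion a n (c / x) := by
  ext z
  simp [hyperbolicRegion, Fin.forall_fin_succ, Fin.prod_univ_succ, hx,
    lt_div_iff₀ (ha.trans_lt hx), mul_comm x]

theorem setOf_cons_mem_hyperbolicRegion_of_le {a c x : ℝ} {n : ℕ} (hx : x ≤ a) :
    {z : Fin n → ℝ | Fin.cons x z ∈ hyperbolicRegion a (n + 1) c} = ∅ := by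
  ext z
  simp [hyperbolicRegion, Fin.forall_fin_succ, hx.not_gt]

theorem volume_hyperbolicRegion_succ {a : ℝ} (ha : 0 < a) (n : ℕ) (c : ℝ) :
    volume (hyperbolicRegion a (n + 1) c) =
      ∫⁻ x in Ioo a (c / a ^ n), volume (hyperbolicRegion a n (c / x)) := by
  rw [volume_eq_lintegral_volume_cons (measurableSet_hyperbolicRegion a (n + 1) c),
    ← lintegral_indicator measurableSet_Ioo]
  refine lintegral_congr fun x => ?_
  rcases le_or_gt x a with hxa | hax
  · simp [setOf_cons_mem_hyperbolicRegion_of_le hxa, hxa.not_gt]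
  rw [setOf_cons_mem_hyperbolicRegion ha.le hax]
  by_cases hxb : x < c / a ^ n
  · rw [indicator_of_mem (show x ∈ Ioo a (c / a ^ n) from ⟨hax, hxb⟩)]
  · rw [indicator_of_notMem (fun h => hxb h.2), hyperbolicRegion_eq_empty ha.le, measure_empty]
    rw [div_le_iff₀ (ha.trans hax), mul_comm]
    exact (div_le_iff₀ (pow_pos ha n)).1 (not_lt.1 hxb)

noncomputable def hyperbolicVolume (a : ℝ) (n : ℕ) (c : ℝ) : ℝ :=
  c * altExpSum n (Real.log (c / a ^ n)) + (-1) ^ n * a ^ n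

theorem continuousOn_hyperbolicVolume_div {a c : ℝ} (ha : a ≠ 0) (hc : c ≠ 0) (n : ℕ) :
    ContinuousOn (fun x => hyperbolicVolume a n (c / x)) (Ioi 0) := by
  have hdiv : ContinuousOn (fun x : ℝ => c / x) (Ioi 0) :=
    continuousOn_const.div continuousOn_id fun x hx => ne_of_gt hx
  have hlog : ContinuousOn (fun x => Real.log (c / x / a ^ n)) (Ioi 0) :=
    (hdiv.div_const _).log fun x hx => div_ne_zero (div_ne_zero hc (ne_of_gt hx)) (pow_ne_zero n ha)
  exact (hdiv.mul ((continuous_altExpSum n).comp_continuousOn hlog)).add continuousOn_const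

theorem hasDerivAt_hyperbolicVolume_primitive (n : ℕ) (a c M : ℝ) {x : ℝ} (hx : 0 < x) :
    HasDerivAt (fun x => -c * altExpSum (n + 1) (M - Real.log x) + (-1) ^ n * a ^ n * x)
      (c / x * altExpSum n (M - Real.log x) + (-1) ^ n * a ^ n) x := by
  have hlog := ((hasDerivAt_altExpSum_succ n _).comp x ((Real.hasDerivAt_log hx.ne').const_sub M))
  exact ((hlog.const_mul (-c)).add ((hasDerivAt_id x).const_mul ((-1) ^ n * a ^ n))).congr_deriv
    (by field_simp)

theorem integral_hyperbolicVolume_div {a c : ℝ} (ha : 0 < a) (hc : 0 < c) (n : ℕ) :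
    ∫ x in a..c / a ^ n, hyperbolicVolume a n (c / x) = hyperbolicVolume a (n + 1) c := by
  set b := c / a ^ n
  have hb : 0 < b := by positivity
  have hpos : ∀ x ∈ uIcc a b, 0 < x := fun x hx => (lt_min ha hb).trans_le hx.1
  have hcont : ContinuousOn (fun x => hyperbolicVolume a n (c / x)) (uIcc a b) :=
    (continuousOn_hyperbolicVolume_div ha.ne' hc.ne' n).mono hpos
  have hderiv : ∀ x ∈ uIcc a b, HasDerivAt
      (fun x => -c * altExpSum (n + 1) (Real.log b - Real.log x) + (-1) ^ n * a ^ n * x)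
      (hyperbolicVolume a n (c / x)) x := by
    intro x hx
    rw [hyperbolicVolume, div_right_comm, Real.log_div hb.ne' (hpos x hx).ne']
    exact hasDerivAt_hyperbolicVolume_primitive n a c _ (hpos x hx)
  rw [intervalIntegral.integral_eq_sub_of_hasDerivAt hderiv hcont.intervalIntegrable]
  have hba : b / a = c / a ^ (n + 1) := by rw [pow_succ, ← div_div]
  have hab : a ^ n * b = c := mul_div_cancel₀ c (pow_ne_zero n ha.ne')
  rw [sub_self, altExpSum_succ_zero, ← Real.log_div hb.ne' ha.ne', hba, hyperbolicVolume]
  linear_combination (-1) ^ n * hab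

theorem volume_hyperbolicRegion {a : ℝ} (ha : 0 < a) (n : ℕ) {c : ℝ} (hc : a ^ n < c) :
    0 ≤ hyperbolicVolume a n c ∧
      volume (hyperbolicRegion a n c) = ENNReal.ofReal (hyperbolicVolume a n c) := by
  induction n generalizing c with
  | zero =>
    have h1 : hyperbolicVolume a 0 c = 1 := by simp [hyperbolicVolume, altExpSum]
    rw [pow_zero] at hc
    rw [h1, hyperbolicRegion_zero hc, volume_pi, Measure.pi_of_empty]
    simp
  | succ n ih =>
    set b := c / a ^ n
    have hc0 : 0 < c := (pow_pos ha _).trans hc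
    have hab : a < b := by rw [lt_div_iff₀ (pow_pos ha n), ← pow_succ']; exact hc
    have hcx : ∀ x ∈ Ioo a b, a ^ n < c / x := fun x hx => by
      rw [lt_div_iff₀ (ha.trans hx.1), mul_comm]
      exact (lt_div_iff₀ (pow_pos ha n)).1 hx.2
    have hnonneg : ∀ x ∈ Ioo a b, 0 ≤ hyperbolicVolume a n (c / x) := fun x hx =>
      (ih (hcx x hx)).1
    have hintegrable : IntegrableOn (fun x => hyperbolicVolume a n (c / x)) (Ioo a b) :=
      ((continuousOn_hyperbolicVolume_div ha.ne' hc0.ne' n).mono fun x hx => ha.trans_le hx.1)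
        |>.integrableOn_Icc.mono_set Ioo_subset_Icc_self
    have hintegral :
        ∫ x in Ioo a b, hyperbolicVolume a n (c / x) = hyperbolicVolume a (n + 1) c := by
      rw [← integral_Ioc_eq_integral_Ioo, ← intervalIntegral.integral_of_le hab.le,
        integral_hyperbolicVolume_div ha hc0]
    refine ⟨hintegral ▸ setIntegral_nonneg measurableSet_Ioo hnonneg, ?_⟩
    rw [volume_hyperbolicRegion_succ ha,
      setLIntegral_congr_fun measurableSet_Ioo fun x hx => (ih (hcx x hx)).2, ← hintegral,
      ofReal_integral_eq_lintegral_ofReal hintegrable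
        ((ae_restrict_iff' measurableSet_Ioo).2 (ae_of_all _ hnonneg))]

theorem log_div_const_isEquivalent {k : ℝ} (hk : 0 < k) :
    (fun c => Real.log (c / k)) ~[atTop] Real.log := by
  have hconst : (fun _ => Real.log k) =o[atTop] Real.log :=
    isLittleO_const_left.2 (Or.inr (tendsto_norm_atTop_atTop.comp Real.tendsto_log_atTop))
  refine (IsEquivalent.refl.sub_isLittleO hconst).congr_left ?_
  filter_upwards [eventually_gt_atTop 0] with c hc
  simp [Real.log_div hc.ne' hk.ne']

theorem tendsto_mul_log_pow_atTop (m : ℕ) :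
    Tendsto (fun c => c * Real.log c ^ m) atTop atTop := by
  refine tendsto_atTop_mono' atTop ?_ tendsto_id
  filter_upwards [Real.tendsto_log_atTop.eventually_ge_atTop 1, eventually_ge_atTop 0]
    with c hlog hc
  exact le_mul_of_one_le_right hc (one_le_pow₀ hlog)

theorem hyperbolicVolume_isEquivalent {a : ℝ} (ha : 0 < a) (m : ℕ) :
    hyperbolicVolume a (m + 1) ~[atTop] fun c => c * Real.log c ^ m / m ! := by
  have hlog := log_div_const_isEquivalent (pow_pos ha (m + 1))
  have hP : (fun c => altExpSum (m + 1) (Real.log (c / a ^ (m + 1)))) ~[atTop]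
      fun c => Real.log c ^ m / m ! :=
    ((altExpSum_succ_isEquivalent m).comp_tendsto
      (hlog.symm.tendsto_atTop Real.tendsto_log_atTop)).trans ((hlog.pow m).div IsEquivalent.refl)
  have hv : Tendsto (norm ∘ fun c => c * Real.log c ^ m / m !) atTop atTop :=
    tendsto_norm_atTop_atTop.comp ((tendsto_mul_log_pow_atTop m).atTop_div_const (by positivity))
  exact ((IsEquivalent.refl (u := id)).mul hP).congr_right
    (.of_eq (funext fun c => (mul_div_assoc c _ _).symm)) |>.add_const_of_norm_tendsto_atTop hv

theorem volume_asymptotics (n : ℕ) (hn : 1 ≤ n) (R r : ℝ) (hR : 0 < R) (hr : 0 < r) :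
    (∀ c : ℝ, (R + r) ^ n < c →
      volume {x : Fin n → ℝ | (∀ k, R < x k) ∧ (∏ k, (x k + r)) < c} < ⊤) ∧
    Tendsto
      (fun c : ℝ =>
        (volume {x : Fin n → ℝ | (∀ k, R < x k) ∧ (∏ k, (x k + r)) < c}).toReal /
          (c * (Real.log c) ^ (n - 1)))
      atTop (nhds (1 / (Nat.factorial (n - 1) : ℝ))) := by
  have ha : 0 < R + r := add_pos hR hr
  have hE : ∀ c, {x : Fin n → ℝ | (∀ k, R < x k) ∧ ∏ k, (x k + r) < c} =
      (· + fun _ => r) ⁻¹' hyperbolicRegion (R + r) n c := fun c => by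
    ext x
    simp [hyperbolicRegion]
  simp only [hE, measure_preimage_add_right]
  obtain ⟨m, rfl⟩ : ∃ m, n = m + 1 := ⟨n - 1, by omega⟩
  refine ⟨fun c hc => (volume_hyperbolicRegion ha _ hc).2 ▸ ENNReal.ofReal_lt_top, ?_⟩
  have hvol : (fun c => (volume (hyperbolicRegion (R + r) (m + 1) c)).toReal) ~[atTop]
      fun c => c * Real.log c ^ m / m ! :=
    (hyperbolicVolume_isEquivalent ha m).congr_left <| by
      filter_upwards [eventually_gt_atTop ((R + r) ^ (m + 1))] with c hc
      obtain ⟨hnonneg, hV⟩ := volume_hyperbolicRegion ha _ hc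
      rw [hV, ENNReal.toReal_ofReal hnonneg]
  rw [Nat.add_sub_cancel]
  refine (hvol.div IsEquivalent.refl).symm.tendsto_nhds (tendsto_const_nhds.congr' ?_)
  filter_upwards [(tendsto_mul_log_pow_atTop m).eventually_gt_atTop 0] with c hc
  rw [Pi.div_apply, div_right_comm, div_self hc.ne']
end

section
/- Let n ≥ 1, R, r, c > 0 with c > (R + r)^n. Then the Lebesgue measure of {x ∈ ℝⁿ : x₁,…,xₙ > R, ∏ₖ (xₖ + r) < c} equals ∑_{k=1}^n B_{n,k} c (log c)^{n-k} + (-1)^n (R + r)^n, where B_{n,1} = 1/(n-1)! and B_{n,k} for k ≥ 2 are real constants depending only on n, k, and R + r. -/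
/-!
Translating by `r` reduces the problem to the region `a < y k`, `∏ y k < c` with `a = R + r`;
let `V n c` be its volume. Slicing off the first coordinate `t`, which ranges over
`(a, c / a ^ n)`, gives `V (n + 1) c = ∫ t in a..c / a ^ n, V n (c / t)`. If
`V n c = c * P (log c) + (-1) ^ n * a ^ n` for a polynomial `P`, the integrand is the derivative of
`(-1) ^ n * a ^ n * t - c * Q (log c - log t)` with `Q' = P`, so `V (n + 1) c` has the same
shape with the polynomial `Q (X - log a) - Q (n * log a) + (-1) ^ n`, whose degree is one larger
and whose leading coefficient is that of `P` divided by `n + 1`. Starting from `V 0 c = 1`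
(so `P = 0`) this gives degree `n - 1` and leading coefficient `1 / (n - 1)!`.
-/

open MeasureTheory Polynomial Set

namespace Polynomial

variable {K : Type*} [Field K]

noncomputable def antideriv (P : K[X]) : K[X] :=
  ∑ j ∈ P.support, C (P.coeff j / (j + 1)) * X ^ (j + 1)

theorem derivative_antideriv [CharZero K] (P : K[X]) : derivative (antideriv P) = P := by
  rw [antideriv, map_sum]
  conv_rhs => rw [P.as_sum_support_C_mul_X_pow]
  refine Finset.sum_congr rfl fun j _ => ?_
  have : (j + 1 : K) ≠ 0 := Nat.cast_add_one_ne_zero j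
  rw [derivative_C_mul_X_pow]
  push_cast
  field_simp

@[simp]
theorem antideriv_zero : antideriv (0 : K[X]) = 0 := by
  simp [antideriv]

theorem natDegree_antideriv_le (P : K[X]) : (antideriv P).natDegree ≤ P.natDegree + 1 :=
  natDegree_sum_le_of_forall_le _ _ fun j hj =>
    (natDegree_C_mul_X_pow_le _ _).trans (by simpa using le_natDegree_of_mem_supp j hj)

theorem coeff_antideriv_succ (P : K[X]) (j : ℕ) :
    (antideriv P).coeff (j + 1) = P.coeff j / (j + 1) := by
  simp only [antideriv, finsetSum_coeff, coeff_C_mul_X_pow, add_left_inj]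
  rw [Finset.sum_ite_eq]
  split_ifs with hj
  · rfl
  · simp [notMem_support_iff.1 hj]

variable {R : Type*} [CommRing R]

theorem coeff_taylor_of_natDegree_le {p : R[X]} {n : ℕ} (h : p.natDegree ≤ n) (r : R) :
    (taylor r p).coeff n = p.coeff n := by
  rcases h.lt_or_eq with h | rfl
  · rw [taylor_coeff (r := r), hasseDeriv_eq_zero_of_lt_natDegree p n h, eval_zero,
      coeff_eq_zero_of_natDegree_lt h]
  · exact coeff_taylor_natDegree r p

theorem sum_Icc_coeff_mul_pow_eq_eval {p : R[X]} {n : ℕ} (h : p.natDegree < n) (x : R) :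
    ∑ k ∈ Finset.Icc 1 n, p.coeff (n - k) * x ^ (n - k) = p.eval x := by
  rw [eval_eq_sum_range' h]
  refine Finset.sum_nbij' (fun k => n - k) (fun j => n - j) ?_ ?_ ?_ ?_ fun _ _ => rfl <;>
    intro k hk <;> simp only [Finset.mem_Icc, Finset.mem_range] at hk ⊢ <;> omega

end Polynomial

def prodRegion (a : ℝ) (n : ℕ) (c : ℝ) : Set (Fin n → ℝ) :=
  {y | (∀ k, a < y k) ∧ ∏ k, y k < c}

theorem measurableSet_prodRegion (a : ℝ) (n : ℕ) (c : ℝ) :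
    MeasurableSet (prodRegion a n c) := by
  unfold prodRegion
  measurability

theorem prodRegion_eq_empty {a c : ℝ} {n : ℕ} (ha : 0 ≤ a) (hc : c ≤ a ^ n) :
    prodRegion a n c = ∅ := by
  refine eq_empty_of_forall_notMem fun y ⟨hy, hlt⟩ => hlt.not_ge (hc.trans ?_)
  simpa using Finset.prod_le_prod (s := Finset.univ) (fun _ _ => ha) fun k _ => (hy k).le

theorem prodRegion_zero {a c : ℝ} (hc : 1 < c) : prodRegion a 0 c = univ := by
  simp [prodRegion, hc]

theorem cons_mem_prodRegion_iff {a c t : ℝ} {n : ℕ} (ha : 0 ≤ a) (y : Fin n → ℝ) :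
    Fin.cons (α := fun _ => ℝ) t y ∈ prodRegion a (n + 1) c ↔
      a < t ∧ y ∈ prodRegion a n (c / t) := by
  simp only [prodRegion, mem_ofPred_eq, Fin.forall_fin_succ, Fin.prod_univ_succ, Fin.cons_zero,
    Fin.cons_succ, and_assoc, and_congr_right_iff]
  intro hat _
  rw [lt_div_iff₀' (ha.trans_lt hat)]

theorem volume_eq_lintegral_volume_cons_preimage {n : ℕ} {s : Set (Fin (n + 1) → ℝ)}
    (hs : MeasurableSet s) :
    volume s = ∫⁻ t, volume (Fin.cons (α := fun _ => ℝ) t ⁻¹' s) := by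
  have he := volume_preserving_piFinSuccAbove (fun _ : Fin (n + 1) => ℝ) 0
  rw [← (he.symm _).measure_preimage hs.nullMeasurableSet, Measure.volume_eq_prod,
    Measure.prod_apply (hs.preimage (MeasurableEquiv.measurable _))]
  simp only [MeasurableEquiv.piFinSuccAbove, Fin.zero_succAbove, Fin.insertNthEquiv_zero,
    MeasurableEquiv.symm_mk, MeasurableEquiv.coe_mk]
  rfl

theorem volume_prodRegion_succ {a : ℝ} (ha : 0 < a) (n : ℕ) (c : ℝ) :
    volume (prodRegion a (n + 1) c) =
      ∫⁻ t in Ioo a (c / a ^ n), volume (prodRegion a n (c / t)) := by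
  rw [volume_eq_lintegral_volume_cons_preimage (measurableSet_prodRegion _ _ _),
    ← lintegral_indicator measurableSet_Ioo]
  congr 1 with t
  by_cases hat : a < t
  · have hslice :
        Fin.cons (α := fun _ => ℝ) t ⁻¹' prodRegion a (n + 1) c = prodRegion a n (c / t) := by
      ext y
      simp [cons_mem_prodRegion_iff ha.le, hat]
    by_cases htc : t < c / a ^ n
    · rw [hslice, indicator_of_mem (show t ∈ Ioo a (c / a ^ n) from ⟨hat, htc⟩)]
    · have hempty : prodRegion a n (c / t) = ∅ := by
        refine prodRegion_eq_empty ha.le ?_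
        rw [div_le_iff₀ (ha.trans hat)]
        rw [not_lt, div_le_iff₀ (by positivity)] at htc
        linarith
      rw [hslice, indicator_of_notMem fun h => htc h.2, hempty, measure_empty]
  · have hslice : Fin.cons (α := fun _ => ℝ) t ⁻¹' prodRegion a (n + 1) c = ∅ := by
      ext y
      simp [cons_mem_prodRegion_iff ha.le, hat]
    rw [hslice, indicator_of_notMem fun h => hat h.1, measure_empty]

noncomputable def volPoly (a : ℝ) : ℕ → ℝ[X]
  | 0 => 0
  | n + 1 =>
    taylor (-Real.log a) (antideriv (volPoly a n)) +
      C ((-1) ^ n - (antideriv (volPoly a n)).eval (n * Real.log a))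

noncomputable def volFormula (a : ℝ) (n : ℕ) (c : ℝ) : ℝ :=
  c * (volPoly a n).eval (Real.log c) + (-1) ^ n * a ^ n

theorem natDegree_volPoly_le (a : ℝ) (n : ℕ) : (volPoly a (n + 1)).natDegree ≤ n := by
  induction n with
  | zero => simp [volPoly]
  | succ n ih =>
    rw [volPoly]
    refine (natDegree_add_C).le.trans ?_
    rw [natDegree_taylor]
    exact (natDegree_antideriv_le _).trans (by omega)

theorem coeff_volPoly (a : ℝ) (n : ℕ) : (volPoly a (n + 1)).coeff n = 1 / n.factorial := by
  induction n with
  | zero => simp [volPoly]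
  | succ n ih =>
    have hdeg := (natDegree_antideriv_le (volPoly a (n + 1))).trans
      (Nat.succ_le_succ (natDegree_volPoly_le a n))
    rw [volPoly, coeff_add, coeff_C_of_ne_zero n.succ_ne_zero, add_zero,
      coeff_taylor_of_natDegree_le hdeg, coeff_antideriv_succ, ih, Nat.factorial_succ]
    push_cast
    field_simp

theorem continuousOn_volFormula_div (a : ℝ) (n : ℕ) {c : ℝ} (hc : 0 < c) :
    ContinuousOn (fun t => volFormula a n (c / t)) (Ioi 0) := by
  unfold volFormula
  fun_prop (disch := intro t (ht : 0 < t); positivity)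

theorem integral_volFormula_div {a c : ℝ} (ha : 0 < a) (hc : 0 < c) (n : ℕ) :
    ∫ t in a..c / a ^ n, volFormula a n (c / t) = volFormula a (n + 1) c := by
  have hpos : ∀ t ∈ uIcc a (c / a ^ n), 0 < t := fun t ht =>
    (lt_min ha (by positivity)).trans_le ht.1
  have hderiv : ∀ t ∈ uIcc a (c / a ^ n), HasDerivAt
      (fun t => (-1) ^ n * a ^ n * t -
        c * (antideriv (volPoly a n)).eval (Real.log c - Real.log t))
      (volFormula a n (c / t)) t := by
    intro t ht
    have hlog := ((Real.hasDerivAt_log (hpos t ht).ne').const_sub (Real.log c))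
    have hQ := ((antideriv (volPoly a n)).hasDerivAt _).comp t hlog
    rw [derivative_antideriv] at hQ
    refine (((hasDerivAt_id t).const_mul ((-1) ^ n * a ^ n)).sub (hQ.const_mul c)).congr_deriv ?_
    rw [volFormula, Real.log_div hc.ne' (hpos t ht).ne']
    field_simp
    ring
  rw [intervalIntegral.integral_eq_sub_of_hasDerivAt hderiv ?_]
  · rw [Real.log_div hc.ne' (by positivity), Real.log_pow, volFormula, volPoly]
    simp only [eval_add, taylor_eval, eval_C, sub_sub_cancel]
    have : a ^ n * (c / a ^ n) = c := mul_div_cancel₀ c (by positivity)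
    linear_combination (-1) ^ n * this
  · exact ((continuousOn_volFormula_div a n hc).mono hpos).intervalIntegrable

theorem volume_prodRegion {a c : ℝ} (ha : 0 < a) {n : ℕ} (hc : a ^ n < c) :
    0 ≤ volFormula a n c ∧ volume (prodRegion a n c) = ENNReal.ofReal (volFormula a n c) := by
  induction n generalizing c with
  | zero =>
    have : volFormula a 0 c = 1 := by simp [volFormula, volPoly]
    simp [this, prodRegion_zero (by simpa using hc), volume_pi]
  | succ n ih =>
    have hc0 : 0 < c := (pow_pos ha _).trans hc
    have hX : a < c / a ^ n := by
      rwa [lt_div_iff₀ (by positivity), ← pow_succ']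
    have hslice : ∀ t ∈ Ioo a (c / a ^ n), a ^ n < c / t := fun t ht => by
      rw [lt_div_iff₀' (ha.trans ht.1)]
      exact (lt_div_iff₀ (by positivity)).1 ht.2
    have hnonneg : ∀ t ∈ Ioo a (c / a ^ n), 0 ≤ volFormula a n (c / t) := fun t ht =>
      (ih (hslice t ht)).1
    have hint : IntegrableOn (fun t => volFormula a n (c / t)) (Ioo a (c / a ^ n)) :=
      ((continuousOn_volFormula_div a n hc0).mono fun t ht => ha.trans_le ht.1)
        |>.integrableOn_Icc.mono_set Ioo_subset_Icc_self
    have hintegral :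
        ∫ t in Ioo a (c / a ^ n), volFormula a n (c / t) = volFormula a (n + 1) c := by
      rw [← integral_Ioc_eq_integral_Ioo, ← intervalIntegral.integral_of_le hX.le,
        integral_volFormula_div ha hc0]
    refine hintegral ▸ ⟨setIntegral_nonneg measurableSet_Ioo hnonneg, ?_⟩
    rw [volume_prodRegion_succ ha,
      setLIntegral_congr_fun measurableSet_Ioo fun t ht => (ih (hslice t ht)).2,
      ofReal_integral_eq_lintegral_ofReal hint
        ((ae_restrict_iff' measurableSet_Ioo).2 (ae_of_all _ hnonneg))]

theorem volume_lemma (n : ℕ) (hn : 1 ≤ n) (R r : ℝ) (hR : 0 < R) (hr : 0 < r) :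
    ∃ B : ℕ → ℝ, B 1 = 1 / (Nat.factorial (n - 1) : ℝ) ∧
      ∀ c : ℝ, 0 < c → (R + r) ^ n < c →
        volume {x : Fin n → ℝ | (∀ k, R < x k) ∧ (∏ k, (x k + r)) < c} =
          ENNReal.ofReal
            ((∑ k ∈ Finset.Icc 1 n, B k * c * (Real.log c) ^ (n - k)) +
              (-1 : ℝ) ^ n * (R + r) ^ n) := by
  obtain ⟨m, rfl⟩ : ∃ m, n = m + 1 := ⟨n - 1, by omega⟩
  have ha : 0 < R + r := by positivity
  refine ⟨fun k => (volPoly (R + r) (m + 1)).coeff (m + 1 - k),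
    by simpa using coeff_volPoly (R + r) m, fun c _ hc => ?_⟩
  have hshift : {x : Fin (m + 1) → ℝ | (∀ k, R < x k) ∧ ∏ k, (x k + r) < c} =
      (· + fun _ => r) ⁻¹' prodRegion (R + r) (m + 1) c := by
    ext x
    simp [prodRegion]
  rw [hshift, measure_preimage_add_right, (volume_prodRegion ha hc).2, volFormula]
  simp_rw [mul_right_comm _ c, ← Finset.sum_mul,
    sum_Icc_coeff_mul_pow_eq_eval (Nat.lt_succ_of_le (natDegree_volPoly_le _ m)), mul_comm]
end

section
/- Let f : ℝ → ℝ be nonnegative, supported in [-r, r], continuous on [-r, r], bounded above by A, and bounded below by ε/(2r) on [-r, r], where A, r, ε > 0. Set R = (2r)² A / ε + r. Then for every x > R, the supremum over all intervals [a, b] with a ≤ x ≤ b, a < b, of (1/(b-a)) ∫_a^b f equals (1/(x + r)) ∫_{-r}^r f. -/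
/-!
Far from the support, an interval `[a, b] ∋ x` can only gain by stretching its left end down to
`-r`. If `a ≤ -r` it already carries all the mass; if `-r < a < r`, then `f ≥ ε / (2r)` on
`[-r, a]`, while the mean of `f` over `[a, x]` is at most `A (r - a) / (x - a) < ε / (2r)` once
`x > R`. Hence the mean over `[-r, x]`, a mediant of the two, beats the mean over `[a, x]`, and the
supremum is attained at `[-r, x]`.
-/

open MeasureTheory Set

noncomputable def uncenteredMaximal (f : ℝ → ℝ) (x : ℝ) : ℝ :=
  ⨆ (a : ℝ) (b : ℝ) (_ : a ≤ x) (_ : x ≤ b) (_ : a < b), (1 / (b - a)) * ∫ y in a..b, f y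

/-- `0 ≤ M` is needed because the suprema over empty index types take the junk value `0`. -/
theorem uncenteredMaximal_eq_of_le_of_eq {f : ℝ → ℝ} {x M : ℝ} (hM : 0 ≤ M)
    (hle : ∀ a b, a ≤ x → x ≤ b → a < b → (1 / (b - a)) * ∫ y in a..b, f y ≤ M)
    {a₀ b₀ : ℝ} (ha₀ : a₀ ≤ x) (hb₀ : x ≤ b₀) (hab₀ : a₀ < b₀)
    (hattain : (1 / (b₀ - a₀)) * ∫ y in a₀..b₀, f y = M) :
    uncenteredMaximal f x = M := by
  have hinner : ∀ a b,
      (⨆ (_ : a ≤ x) (_ : x ≤ b) (_ : a < b), (1 / (b - a)) * ∫ y in a..b, f y) ≤ M :=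
    fun a b => Real.iSup_le (fun h₁ => Real.iSup_le (fun h₂ =>
      Real.iSup_le (hle a b h₁ h₂) hM) hM) hM
  refine le_antisymm (Real.iSup_le (fun a => Real.iSup_le (hinner a) hM) hM) ?_
  calc M = ⨆ (_ : a₀ ≤ x) (_ : x ≤ b₀) (_ : a₀ < b₀),
          (1 / (b₀ - a₀)) * ∫ y in a₀..b₀, f y := by
        rw [ciSup_pos ha₀, ciSup_pos hb₀, ciSup_pos hab₀, hattain]
    _ ≤ ⨆ (b : ℝ) (_ : a₀ ≤ x) (_ : x ≤ b) (_ : a₀ < b),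
          (1 / (b - a₀)) * ∫ y in a₀..b, f y :=
        le_ciSup (f := fun b => ⨆ (_ : a₀ ≤ x) (_ : x ≤ b) (_ : a₀ < b),
          (1 / (b - a₀)) * ∫ y in a₀..b, f y) ⟨M, by rintro _ ⟨b, rfl⟩; exact hinner a₀ b⟩ b₀
    _ ≤ uncenteredMaximal f x :=
        le_ciSup ⟨M, by rintro _ ⟨a, rfl⟩; exact Real.iSup_le (hinner a) hM⟩ a₀

theorem intervalIntegral_eq_of_eq_zero_off {E : Type*} [NormedAddCommGroup E] [NormedSpace ℝ E]
    {f : ℝ → E} {a b c d : ℝ} (hac : a ≤ c) (hcd : c ≤ d) (hdb : d ≤ b)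
    (hf : ∀ y ∈ Icc a b \ Icc c d, f y = 0) :
    ∫ y in a..b, f y = ∫ y in c..d, f y := by
  rw [intervalIntegral.integral_of_le (hac.trans (hcd.trans hdb)),
    intervalIntegral.integral_of_le hcd, ← integral_Icc_eq_integral_Ioc,
    ← integral_Icc_eq_integral_Ioc]
  exact setIntegral_eq_of_subset_of_forall_sdiff_eq_zero measurableSet_Icc
    (Icc_subset_Icc hac hdb) hf

theorem mul_add_le_mul_sub_of_far {r A ε a x J K : ℝ} (hr : 0 < r) (hA : 0 ≤ A) (hε : 0 < ε)
    (ha : a ∈ Icc (-r) r) (hx : (2 * r) ^ 2 * A / ε + r < x)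
    (hJ : J ≤ A * (r - a)) (hK : (a + r) * (ε / (2 * r)) ≤ K) :
    J * (a + r) ≤ K * (x - a) := by
  have hR : 0 ≤ (2 * r) ^ 2 * A / ε := by positivity
  have hfar : A * (r - a) ≤ ε / (2 * r) * (x - a) :=
    calc A * (r - a) ≤ A * (2 * r) := by gcongr; linarith [ha.1]
      _ = (2 * r) ^ 2 * A / ε * (ε / (2 * r)) := by field_simp
      _ ≤ (x - a) * (ε / (2 * r)) := by gcongr; linarith [ha.2]
      _ = ε / (2 * r) * (x - a) := mul_comm _ _
  calc J * (a + r) ≤ A * (r - a) * (a + r) := by gcongr; linarith [ha.1]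
    _ ≤ (a + r) * (ε / (2 * r)) * (x - a) := by
        linarith [mul_le_mul_of_nonneg_left hfar (by linarith [ha.1] : 0 ≤ a + r)]
    _ ≤ K * (x - a) := by gcongr; linarith [ha.2]

theorem average_le_of_far {f : ℝ → ℝ} {r A ε x a b : ℝ} (hr : 0 < r) (hA : 0 ≤ A) (hε : 0 < ε)
    (hf0 : ∀ y, 0 ≤ f y) (hsupp : ∀ y ∉ Icc (-r) r, f y = 0)
    (hint : ∀ a b, IntervalIntegrable f volume a b)
    (hub : ∀ y ∈ Icc (-r) r, f y ≤ A) (hlb : ∀ y ∈ Icc (-r) r, ε / (2 * r) ≤ f y)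
    (hx : (2 * r) ^ 2 * A / ε + r < x) (hxb : x ≤ b) (hab : a < b) :
    (1 / (b - a)) * ∫ y in a..b, f y ≤ (1 / (x + r)) * ∫ y in (-r)..r, f y := by
  have hrx : r < x := by
    have : 0 ≤ (2 * r) ^ 2 * A / ε := by positivity
    linarith
  have hvanish : ∀ y, r < y → f y = 0 := fun y hy => hsupp y fun h => hy.not_ge h.2
  rw [one_div_mul_eq_div, one_div_mul_eq_div]
  rcases le_or_gt a (-r) with ha | ha
  · rw [intervalIntegral_eq_of_eq_zero_off ha (by linarith) (by linarith)
      fun y hy => hsupp y hy.2]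
    exact div_le_div_of_nonneg_left
      (intervalIntegral.integral_nonneg (by linarith) fun y _ => hf0 y) (by linarith) (by linarith)
  rcases le_or_gt r a with ha' | ha'
  · rw [intervalIntegral_eq_of_eq_zero_off le_rfl le_rfl hab.le
      fun y hy => hvanish y (ha'.trans_lt (lt_of_le_of_ne hy.1.1 fun h => hy.2 ⟨h.le, h.ge⟩)),
      intervalIntegral.integral_same, zero_div]
    exact div_nonneg (intervalIntegral.integral_nonneg (by linarith) fun y _ => hf0 y)
      (by linarith)
  rw [intervalIntegral_eq_of_eq_zero_off le_rfl ha'.le (by linarith)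
      fun y hy => hvanish y (lt_of_not_ge fun h => hy.2 ⟨hy.1.1, h⟩),
    ← intervalIntegral.integral_add_adjacent_intervals (hint (-r) a) (hint a r)]
  set K := ∫ y in (-r)..a, f y
  set J := ∫ y in a..r, f y
  have hJ0 : 0 ≤ J := intervalIntegral.integral_nonneg ha'.le fun y _ => hf0 y
  have hJ : J ≤ A * (r - a) := by
    simpa [mul_comm] using intervalIntegral.integral_mono_on ha'.le (hint a r)
      intervalIntegrable_const fun y hy => hub y ⟨by linarith [hy.1], hy.2⟩
  have hK : (a + r) * (ε / (2 * r)) ≤ K := by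
    simpa [mul_div_assoc] using intervalIntegral.integral_mono_on ha.le
      intervalIntegrable_const (hint (-r) a) fun y hy => hlb y ⟨hy.1, by linarith [hy.2]⟩
  have hmass := mul_add_le_mul_sub_of_far hr hA hε ⟨ha.le, ha'.le⟩ hx hJ hK
  calc J / (b - a) ≤ J / (x - a) := div_le_div_of_nonneg_left hJ0 (by linarith) (by linarith)
    _ ≤ (K + J) / (x + r) := by
        rw [div_le_div_iff₀ (by linarith) (by linarith)]
        linarith

theorem maximal_far_away (r A eps : ℝ) (hr : 0 < r) (hA : 0 < A) (heps : 0 < eps)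
    (f : ℝ → ℝ) (hf0 : ∀ y, 0 ≤ f y)
    (hsupp : ∀ y, y ∉ Set.Icc (-r) r → f y = 0)
    (hcont : ContinuousOn f (Set.Icc (-r) r))
    (hub : ∀ y ∈ Set.Icc (-r) r, f y ≤ A)
    (hlb : ∀ y ∈ Set.Icc (-r) r, eps / (2 * r) ≤ f y)
    (R : ℝ) (hRdef : R = (2 * r) ^ 2 * A / eps + r) :
    ∀ x : ℝ, R < x →
      (⨆ (a : ℝ) (b : ℝ) (_ : a ≤ x) (_ : x ≤ b) (_ : a < b),
          (1 / (b - a)) * ∫ y in a..b, f y) =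
        (1 / (x + r)) * ∫ y in (-r)..r, f y := by
  intro x hx
  subst hRdef
  have hint : ∀ a b, IntervalIntegrable f volume a b := fun a b =>
    (hcont.integrableOn_Icc.integrable_of_forall_notMem_eq_zero hsupp).intervalIntegrable
  have hrx : r < x := by
    have : 0 ≤ (2 * r) ^ 2 * A / eps := by positivity
    linarith
  have hI : 0 ≤ ∫ y in (-r)..r, f y :=
    intervalIntegral.integral_nonneg (by linarith) fun y _ => hf0 y
  refine uncenteredMaximal_eq_of_le_of_eq (mul_nonneg (one_div_nonneg.2 (by linarith)) hI)
    (fun a b _ => average_le_of_far hr hA.le heps hf0 hsupp hint hub hlb hx)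
    (a₀ := -r) (b₀ := x) (by linarith) le_rfl (by linarith) ?_
  rw [intervalIntegral_eq_of_eq_zero_off le_rfl (by linarith) hrx.le fun y hy => hsupp y hy.2,
    sub_neg_eq_add]
end
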